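/- arXiv:1307.7408 — 2 statements merged into one kernel-verified Lean document; each statement's English description precedes it below -/
import Mathlib

section
/- Let A_c* be the main operator of the dual functional-model system node, acting on the dual de Branges–Rovnyak space H_c: dom(A_c*) = {x ∈ H_c : ∃ u ∈ U such that μ ↦ μ x(μ) − u ∈ H_c}, with (A_c* x)(μ) = μ x(μ) − lim_{Re η → ∞} η x(η). Then for every α ∈ ℂ⁺ the resolvent of A_c* is given by ((conj α − A_c*)⁻¹ x)(μ) = (x(μ) − x(conj α))/(conj α − μ) for all x ∈ H_c and μ ∈ ℂ⁺ (with the removable singularity at μ = conj α filled in by holomorphic continuation). -/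
/-!
The resolvent is the adjoint of the operator `R` sending the kernel function `kc l e` to
`(α - conj l)⁻¹ • (kc l e - kc (conj α) e)`: pairing `x` with `R (kc l e)` tests the difference
quotient of `x` at `l` against `e`. `R` is bounded by `1 / Re α` because the kernel identity
`⟪kc l (conj l • u), kc m v⟫ + ⟪kc l u, kc m (conj m • v)⟫ = ⟪u, v⟫ - ⟪φ (conj l) u, φ (conj m) v⟫`
makes multiplication by `conj l` dissipative on combinations whose coefficients sum to zero, and
`α • R y - y` is such a combination. Hence `z = R* x` exists, its values are the difference
quotients of `x`, and `η • z η → x (conj α)` because the decay estimate forces `x η → 0` as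
`Re η → ∞`.
-/

open Filter Topology ComplexConjugate

theorem exists_inner_eq_of_norm_linearCombination_le {𝕜 H ι : Type*} [RCLike 𝕜]
    [NormedAddCommGroup H] [InnerProductSpace 𝕜 H] [CompleteSpace H] (k : ι → H) (t : ι → 𝕜) (C : ℝ)
    (h : ∀ a : ι →₀ 𝕜,
      ‖Finsupp.linearCombination 𝕜 t a‖ ≤ C * ‖Finsupp.linearCombination 𝕜 k a‖) :
    ∃ z : H, ∀ i, inner 𝕜 z (k i) = t i := by
  set L := Finsupp.linearCombination 𝕜 k
  have hker : LinearMap.ker L ≤ LinearMap.ker (Finsupp.linearCombination 𝕜 t) := fun a ha => by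
    simpa [LinearMap.mem_ker.mp ha] using h a
  let χ : LinearMap.range L →ₗ[𝕜] 𝕜 :=
    ((LinearMap.ker L).liftQ _ hker).comp L.quotKerEquivRange.symm.toLinearMap
  have hχ : ∀ a, χ ⟨L a, L.mem_range_self a⟩ = Finsupp.linearCombination 𝕜 t a := fun a => by
    simp [χ, LinearMap.quotKerEquivRange_symm_apply_image]
  have hχC : ∀ m, ‖χ m‖ ≤ C * ‖m‖ := by
    rintro ⟨_, a, rfl⟩
    exact (hχ a).symm ▸ h a
  obtain ⟨G, hG, -⟩ := exists_extension_norm_eq _ (χ.mkContinuous C hχC)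
  refine ⟨(InnerProductSpace.toDual 𝕜 H).symm G, fun i => ?_⟩
  have hki : k i = L (Finsupp.single i 1) := by simp [L]
  rw [InnerProductSpace.toDual_symm_apply, hki, hG ⟨_, L.mem_range_self _⟩,
    LinearMap.mkContinuous_apply, hχ]
  simp

theorem re_mul_norm_le_of_re_inner_smul_sub_nonpos {𝕜 E : Type*} [RCLike 𝕜]
    [NormedAddCommGroup E] [InnerProductSpace 𝕜 E] {a : 𝕜} {z m : E}
    (h : RCLike.re (inner 𝕜 (a • z - m) z) ≤ 0) : RCLike.re a * ‖z‖ ≤ ‖m‖ := by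
  have hre : RCLike.re (inner 𝕜 (a • z - m) z)
      = RCLike.re a * ‖z‖ ^ 2 - RCLike.re (inner 𝕜 m z) := by
    rw [inner_sub_left, inner_smul_left, map_sub, inner_self_eq_norm_sq_to_K, ← RCLike.ofReal_pow,
      RCLike.re_mul_ofReal, RCLike.conj_re]
  have hmz : RCLike.re (inner 𝕜 m z) ≤ ‖m‖ * ‖z‖ :=
    (RCLike.re_le_norm _).trans (norm_inner_le_norm m z)
  rcases (norm_nonneg z).eq_or_lt with hz | hz
  · rw [← hz, mul_zero]; exact norm_nonneg m
  · exact le_of_mul_le_mul_right (by nlinarith) hz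

section Kernel

variable {U Y H : Type*} [NormedAddCommGroup U] [InnerProductSpace ℂ U]
  [NormedAddCommGroup Y] [InnerProductSpace ℂ Y] [NormedAddCommGroup H] [InnerProductSpace ℂ H]

local notation "⟪" x ", " y "⟫" => inner ℂ x y

def IsReproducingKernel (vc : H →ₗ[ℂ] (ℂ → U)) (kc : ℂ → U → H) : Prop :=
  ∀ (f : H) (l : ℂ), 0 < l.re → ∀ u : U, ⟪kc l u, f⟫ = ⟪u, vc f l⟫

def HasDeBrangesRovnyakKernel [CompleteSpace U] [CompleteSpace Y] (φ : ℂ → (U →L[ℂ] Y))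
    (vc : H →ₗ[ℂ] (ℂ → U)) (kc : ℂ → U → H) : Prop :=
  ∀ m l : ℂ, 0 < m.re → 0 < l.re → ∀ u : U,
    vc (kc l u) m = (m + conj l)⁻¹ • (u - (φ (conj m)).adjoint (φ (conj l) u))

namespace IsReproducingKernel

variable {vc : H →ₗ[ℂ] (ℂ → U)} {kc : ℂ → U → H}

theorem inner_kernel_right (hrep : IsReproducingKernel vc kc) (f : H) {l : ℂ} (hl : 0 < l.re)
    (u : U) : ⟪f, kc l u⟫ = ⟪vc f l, u⟫ := by
  rw [← inner_conj_symm, hrep f l hl, inner_conj_symm]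

theorem kernel_smul (hrep : IsReproducingKernel vc kc) {l : ℂ} (hl : 0 < l.re) (c : ℂ) (u : U) :
    kc l (c • u) = c • kc l u :=
  ext_inner_right ℂ fun f => by
    rw [hrep f l hl, inner_smul_left, inner_smul_left, hrep f l hl]

theorem inner_resolvent_kernel (hrep : IsReproducingKernel vc kc) (x : H) {α l : ℂ}
    (hα : 0 < α.re) (hl : 0 < l.re) (e : U) :
    ⟪x, (α - conj l)⁻¹ • (kc l e - kc (conj α) e)⟫
      = ⟪(conj α - l)⁻¹ • (vc x l - vc x (conj α)), e⟫ := by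
  have hβ : 0 < (conj α).re := by rwa [Complex.conj_re]
  rw [inner_smul_right, inner_sub_right, hrep.inner_kernel_right x hl,
    hrep.inner_kernel_right x hβ, inner_smul_left, inner_sub_left, map_inv₀, map_sub,
    Complex.conj_conj]

variable [CompleteSpace U] [CompleteSpace Y] {φ : ℂ → (U →L[ℂ] Y)}

theorem inner_kernel_conj_smul_add (hrep : IsReproducingKernel vc kc)
    (hker : HasDeBrangesRovnyakKernel φ vc kc) {l m : ℂ} (hl : 0 < l.re) (hm : 0 < m.re)
    (u v : U) :
    ⟪kc l (conj l • u), kc m v⟫ + ⟪kc l u, kc m (conj m • v)⟫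
      = ⟪u, v⟫ - ⟪φ (conj l) u, φ (conj m) v⟫ := by
  have hlm : l + conj m ≠ 0 := fun h => by
    have := congrArg Complex.re h
    simp only [Complex.add_re, Complex.conj_re, Complex.zero_re] at this
    linarith
  rw [hrep _ _ hl, hrep _ _ hl, hker _ _ hl hm, hker _ _ hl hm, map_smul, map_smul, ← smul_sub,
    inner_smul_left, inner_smul_right, inner_smul_right, inner_smul_right, inner_sub_right,
    ContinuousLinearMap.adjoint_inner_right, Complex.conj_conj]
  field_simp

theorem inner_sum_kernel_conj_smul_add (hrep : IsReproducingKernel vc kc)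
    (hker : HasDeBrangesRovnyakKernel φ vc kc) {ι : Type*} (s : Finset ι) (q : ι → ℂ)
    (g : ι → U) (hq : ∀ i ∈ s, 0 < (q i).re) :
    ⟪∑ i ∈ s, kc (q i) (conj (q i) • g i), ∑ i ∈ s, kc (q i) (g i)⟫
        + ⟪∑ i ∈ s, kc (q i) (g i), ∑ i ∈ s, kc (q i) (conj (q i) • g i)⟫
      = ⟪∑ i ∈ s, g i, ∑ i ∈ s, g i⟫
        - ⟪∑ i ∈ s, φ (conj (q i)) (g i), ∑ i ∈ s, φ (conj (q i)) (g i)⟫ := by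
  simp only [sum_inner, inner_sum, ← Finset.sum_add_distrib, ← Finset.sum_sub_distrib]
  refine Finset.sum_congr rfl fun i hi => Finset.sum_congr rfl fun j hj => ?_
  exact hrep.inner_kernel_conj_smul_add hker (hq j hj) (hq i hi) _ _

theorem re_inner_sum_kernel_conj_smul_nonpos (hrep : IsReproducingKernel vc kc)
    (hker : HasDeBrangesRovnyakKernel φ vc kc) {ι : Type*} (s : Finset ι) (q : ι → ℂ)
    (g : ι → U) (hq : ∀ i ∈ s, 0 < (q i).re) (hg : ∑ i ∈ s, g i = 0) :
    (⟪∑ i ∈ s, kc (q i) (conj (q i) • g i), ∑ i ∈ s, kc (q i) (g i)⟫).re ≤ 0 := by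
  have h := congrArg Complex.re (hrep.inner_sum_kernel_conj_smul_add hker s q g hq)
  rw [hg, inner_zero_left, zero_sub, Complex.add_re, ← inner_conj_symm (∑ i ∈ s, kc (q i) (g i)),
    Complex.conj_re, Complex.neg_re] at h
  have := inner_self_nonneg (𝕜 := ℂ) (x := ∑ i ∈ s, φ (conj (q i)) (g i))
  rw [RCLike.re_to_complex] at this
  linarith

theorem re_mul_norm_sum_resolvent_kernel_le (hrep : IsReproducingKernel vc kc)
    (hker : HasDeBrangesRovnyakKernel φ vc kc) {α : ℂ} (hα : 0 < α.re) {ι : Type*}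
    (s : Finset ι) (l : ι → ℂ) (e : ι → U) (hl : ∀ i ∈ s, 0 < (l i).re)
    (hlα : ∀ i ∈ s, l i ≠ conj α) :
    α.re * ‖∑ i ∈ s, (α - conj (l i))⁻¹ • (kc (l i) (e i) - kc (conj α) (e i))‖
      ≤ ‖∑ i ∈ s, kc (l i) (e i)‖ := by
  have hβ : 0 < (conj α).re := by rwa [Complex.conj_re]
  set c : ι → ℂ := fun i => (α - conj (l i))⁻¹
  have hc : ∀ i ∈ s, conj (l i) * c i = α * c i - 1 := fun i hi => by
    have : α - conj (l i) ≠ 0 := fun h => hlα i hi <| by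
      rw [sub_eq_zero] at h; rw [h, Complex.conj_conj]
    simp only [c]
    field_simp
    ring
  -- `α • R y - y` as a single combination of kernel functions whose coefficients sum to zero
  let q : ι ⊕ ι → ℂ := Sum.elim l fun _ => conj α
  let g : ι ⊕ ι → U := Sum.elim (fun i => c i • e i) fun i => -(c i • e i)
  have hq : ∀ r ∈ s.disjSum s, 0 < (q r).re := by
    rintro (i | i) hr
    · exact hl i (Finset.inl_mem_disjSum.mp hr)
    · exact hβ
  have hg : ∑ r ∈ s.disjSum s, g r = 0 := by simp [g, Finset.sum_disjSum]
  have hZ : ∑ r ∈ s.disjSum s, kc (q r) (g r)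
      = ∑ i ∈ s, c i • (kc (l i) (e i) - kc (conj α) (e i)) := by
    rw [Finset.sum_disjSum, ← Finset.sum_add_distrib]
    refine Finset.sum_congr rfl fun i hi => ?_
    simp only [q, g, Sum.elim_inl, Sum.elim_inr, ← neg_smul, hrep.kernel_smul (hl i hi),
      hrep.kernel_smul hβ]
    module
  have hB : ∑ r ∈ s.disjSum s, kc (q r) (conj (q r) • g r)
      = α • ∑ i ∈ s, c i • (kc (l i) (e i) - kc (conj α) (e i)) - ∑ i ∈ s, kc (l i) (e i) := by
    rw [Finset.sum_disjSum, Finset.smul_sum, ← Finset.sum_sub_distrib, ← Finset.sum_add_distrib]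
    refine Finset.sum_congr rfl fun i hi => ?_
    simp only [q, g, Sum.elim_inl, Sum.elim_inr, Complex.conj_conj, smul_smul,
      ← neg_smul, hrep.kernel_smul (hl i hi), hrep.kernel_smul hβ, hc i hi]
    module
  have h := hrep.re_inner_sum_kernel_conj_smul_nonpos hker _ q g hq hg
  rw [hB, hZ] at h
  exact re_mul_norm_le_of_re_inner_smul_sub_nonpos (𝕜 := ℂ) h

theorem exists_kernel_difference_quotient [CompleteSpace H] (hrep : IsReproducingKernel vc kc)
    (hker : HasDeBrangesRovnyakKernel φ vc kc) {α : ℂ} (hα : 0 < α.re) (x : H) :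
    ∃ z : H, ∀ l : ℂ, 0 < l.re → l ≠ conj α →
      vc z l = (conj α - l)⁻¹ • (vc x l - vc x (conj α)) := by
  set g : ℂ → U := fun l => (conj α - l)⁻¹ • (vc x l - vc x (conj α))
  let I := {p : ℂ × U // 0 < p.1.re ∧ p.1 ≠ conj α}
  have hbound : ∀ a : I →₀ ℂ,
      ‖Finsupp.linearCombination ℂ (fun p : I => ⟪g p.1.1, p.1.2⟫) a‖
        ≤ ‖x‖ / α.re * ‖Finsupp.linearCombination ℂ (fun p : I => kc p.1.1 p.1.2) a‖ := by
    intro a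
    have hL : Finsupp.linearCombination ℂ (fun p : I => kc p.1.1 p.1.2) a
        = ∑ p ∈ a.support, kc p.1.1 (a p • p.1.2) := by
      rw [Finsupp.linearCombination_apply, Finsupp.sum]
      exact Finset.sum_congr rfl fun p _ => (hrep.kernel_smul p.2.1 _ _).symm
    set R := ∑ p ∈ a.support, (α - conj p.1.1)⁻¹ •
      (kc p.1.1 (a p • p.1.2) - kc (conj α) (a p • p.1.2))
    have hT : Finsupp.linearCombination ℂ (fun p : I => ⟪g p.1.1, p.1.2⟫) a = ⟪x, R⟫ := by
      rw [Finsupp.linearCombination_apply, Finsupp.sum, inner_sum]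
      refine Finset.sum_congr rfl fun p _ => ?_
      rw [hrep.inner_resolvent_kernel x hα p.2.1, inner_smul_right, smul_eq_mul]
    have hR := hrep.re_mul_norm_sum_resolvent_kernel_le hker hα a.support (fun p => p.1.1)
      (fun p => a p • p.1.2) (fun p _ => p.2.1) (fun p _ => p.2.2)
    rw [← hL] at hR
    rw [hT]
    calc ‖⟪x, R⟫‖ ≤ ‖x‖ * ‖R‖ := norm_inner_le_norm x R
      _ ≤ ‖x‖ / α.re * ‖Finsupp.linearCombination ℂ (fun p : I => kc p.1.1 p.1.2) a‖ := by
        rw [div_mul_eq_mul_div, le_div_iff₀ hα, mul_assoc]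
        exact mul_le_mul_of_nonneg_left (by linarith) (norm_nonneg x)
  obtain ⟨z, hz⟩ := exists_inner_eq_of_norm_linearCombination_le _ _ _ hbound
  refine ⟨z, fun l hl hlα => ext_inner_left ℂ fun v => ?_⟩
  rw [← hrep z l hl, ← inner_conj_symm, hz ⟨(l, v), hl, hlα⟩, inner_conj_symm]

end IsReproducingKernel

end Kernel

theorem comap_re_atTop_le_cobounded : comap Complex.re atTop ≤ Bornology.cobounded ℂ :=
  tendsto_id'.mp <| tendsto_norm_atTop_iff_cobounded.mp <|
    tendsto_atTop_mono (fun η => Complex.re_le_norm η) tendsto_comap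

theorem tendsto_mul_inv_const_sub_comap_re_atTop (β : ℂ) :
    Tendsto (fun η : ℂ => η * (β - η)⁻¹) (comap Complex.re atTop) (𝓝 (-1)) := by
  have h : Tendsto (fun η : ℂ => (β * η⁻¹ - 1)⁻¹) (comap Complex.re atTop) (𝓝 (-1)) := by
    have := ((tendsto_inv₀_cobounded.mono_left comap_re_atTop_le_cobounded).const_mul β).sub_const 1
    simpa using this.inv₀ (by norm_num)
  refine h.congr' ?_
  filter_upwards [tendsto_comap.eventually_ne_atTop 0] with η hη
  have hη0 : η ≠ 0 := fun h => hη (by rw [h, Complex.zero_re])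
  rw [← div_eq_mul_inv, div_sub_one hη0, inv_div, div_eq_mul_inv]

theorem tendsto_zero_of_norm_le_div_sqrt_re {E : Type*} [NormedAddCommGroup E] {f : ℂ → E}
    {C : ℝ} (hf : ∀ μ : ℂ, 0 < μ.re → ‖f μ‖ ≤ C / √(2 * μ.re)) :
    Tendsto f (comap Complex.re atTop) (𝓝 0) := by
  have hre : Tendsto Complex.re (comap Complex.re atTop) atTop := tendsto_comap
  refine squeeze_zero_norm' (a := fun μ => C / √(2 * μ.re)) ?_
    (tendsto_const_nhds.div_atTop (Real.tendsto_sqrt_atTop.comp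
      (hre.const_mul_atTop two_pos : Tendsto (fun μ : ℂ => 2 * μ.re) _ atTop)))
  filter_upwards [hre.eventually_gt_atTop 0] with μ hμ
  exact hf μ hμ

theorem tendsto_smul_inv_const_sub_smul_sub {E : Type*} [NormedAddCommGroup E] [NormedSpace ℂ E]
    {f : ℂ → E} (hf : Tendsto f (comap Complex.re atTop) (𝓝 0)) (β : ℂ) (a : E) :
    Tendsto (fun η : ℂ => η • (β - η)⁻¹ • (f η - a)) (comap Complex.re atTop) (𝓝 a) := by
  have := (tendsto_mul_inv_const_sub_comap_re_atTop β).smul (hf.sub_const a)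
  simpa only [zero_sub, neg_one_smul, neg_neg, smul_smul] using this

theorem dbr_dual_resolvent_formula_general
    {U Y Hc : Type*}
    [NormedAddCommGroup U] [InnerProductSpace ℂ U] [CompleteSpace U]
    [NormedAddCommGroup Y] [InnerProductSpace ℂ Y] [CompleteSpace Y]
    [NormedAddCommGroup Hc] [InnerProductSpace ℂ Hc] [CompleteSpace Hc]
    (φ : ℂ → (U →L[ℂ] Y))
    (vc : Hc →ₗ[ℂ] (ℂ → U)) (kc : ℂ → U → Hc)
    (hrep : ∀ (f : Hc) (l : ℂ), 0 < l.re → ∀ u : U,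
      (inner ℂ (kc l u) f : ℂ) = inner ℂ u (vc f l))
    (hker : ∀ m l : ℂ, 0 < m.re → 0 < l.re → ∀ u : U,
      vc (kc l u) m = ((m + (starRingEnd ℂ) l)⁻¹ : ℂ)
        • (u - ContinuousLinearMap.adjoint (φ ((starRingEnd ℂ) m))
            (φ ((starRingEnd ℂ) l) u)))
    (hdecay : ∀ (x : Hc) (μ : ℂ), 0 < μ.re →
      ‖vc x μ‖ ≤ ‖x‖ / Real.sqrt (2 * μ.re))
    (α : ℂ) (hα : 0 < α.re) (x : Hc) :
    ∃ z w : Hc, ∃ u : U,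
      (∀ μ : ℂ, 0 < μ.re → μ ≠ (starRingEnd ℂ) α →
        vc z μ = ((starRingEnd ℂ) α - μ)⁻¹ • (vc x μ - vc x ((starRingEnd ℂ) α))) ∧
      (∀ μ : ℂ, 0 < μ.re → vc w μ = μ • vc z μ - u) ∧
      Tendsto (fun η : ℂ => η • vc z η) (comap Complex.re atTop) (nhds u) ∧
      (starRingEnd ℂ) α • z - w = x := by
  obtain ⟨z, hz⟩ := IsReproducingKernel.exists_kernel_difference_quotient
    (φ := φ) hrep hker hα x
  refine ⟨z, conj α • z - x, vc x (conj α), hz, fun μ hμ => ?_, ?_, sub_sub_cancel _ _⟩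
  · rw [map_sub, map_smul, Pi.sub_apply, Pi.smul_apply]
    rcases eq_or_ne μ (conj α) with rfl | hμα
    · rfl
    · rw [sub_eq_sub_iff_sub_eq_sub, ← sub_smul, hz μ hμ hμα,
        smul_inv_smul₀ (sub_ne_zero.mpr hμα.symm)]
  · refine (tendsto_smul_inv_const_sub_smul_sub
      (tendsto_zero_of_norm_le_div_sqrt_re (hdecay x)) (conj α) (vc x (conj α))).congr' ?_
    filter_upwards [tendsto_comap.eventually_gt_atTop α.re] with η hη
    rw [hz η (hα.trans hη) fun h => hη.ne' (by rw [h, Complex.conj_re])]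

/-- **Resolvent formula for `A_c*` on the dual de Branges–Rovnyak space `H_c`.**
`Hc` is the abstract model of the space with kernel
`K_c(μ,λ) = (1 - φ(conj μ)* φ(conj λ))/(μ + conj λ)`; elements are holomorphic
on `ℂ⁺` and satisfy the `H²`-decay estimate.  `A_c*` has domain
`{x ∈ Hc : ∃ u ∈ U, μ ↦ μ x(μ) - u ∈ Hc}` with
`(A_c* x)(μ) = μ x(μ) - lim_{Re η → ∞} η x(η)`.  For `α ∈ ℂ⁺` and `x ∈ Hc`
there are `z ∈ dom(A_c*)` (with `w = A_c* z`, `u = lim_{Re η→∞} η z(η)`) with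
`(conj α - A_c*) z = x` and `z(μ) = (x(μ) - x(conj α))/(conj α - μ)` on `ℂ⁺`
(away from the removable singularity at `μ = conj α`). -/
theorem dbr_dual_resolvent_formula
    {U Y Hc : Type*}
    [NormedAddCommGroup U] [InnerProductSpace ℂ U] [CompleteSpace U]
    [NormedAddCommGroup Y] [InnerProductSpace ℂ Y] [CompleteSpace Y]
    [NormedAddCommGroup Hc] [InnerProductSpace ℂ Hc] [CompleteSpace Hc]
    (φ : ℂ → (U →L[ℂ] Y))
    (hφcontr : ∀ μ : ℂ, 0 < μ.re → ‖φ μ‖ ≤ 1)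
    (hφhol : DifferentiableOn ℂ φ {μ : ℂ | 0 < μ.re})
    (vc : Hc →ₗ[ℂ] (ℂ → U)) (kc : ℂ → U → Hc)
    (hrep : ∀ (f : Hc) (l : ℂ), 0 < l.re → ∀ u : U,
      (inner ℂ (kc l u) f : ℂ) = inner ℂ u (vc f l))
    (hker : ∀ m l : ℂ, 0 < m.re → 0 < l.re → ∀ u : U,
      vc (kc l u) m = ((m + (starRingEnd ℂ) l)⁻¹ : ℂ)
        • (u - ContinuousLinearMap.adjoint (φ ((starRingEnd ℂ) m))
            (φ ((starRingEnd ℂ) l) u)))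
    (hhol : ∀ x : Hc, DifferentiableOn ℂ (vc x) {μ : ℂ | 0 < μ.re})
    (hdecay : ∀ (x : Hc) (μ : ℂ), 0 < μ.re →
      ‖vc x μ‖ ≤ ‖x‖ / Real.sqrt (2 * μ.re))
    (α : ℂ) (hα : 0 < α.re) (x : Hc) :
    ∃ z w : Hc, ∃ u : U,
      (∀ μ : ℂ, 0 < μ.re → μ ≠ (starRingEnd ℂ) α →
        vc z μ = ((starRingEnd ℂ) α - μ)⁻¹ • (vc x μ - vc x ((starRingEnd ℂ) α))) ∧
      (∀ μ : ℂ, 0 < μ.re → vc w μ = μ • vc z μ - u) ∧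
      Tendsto (fun η : ℂ => η • vc z η) (comap Complex.re atTop) (nhds u) ∧
      (starRingEnd ℂ) α • z - w = x :=
  dbr_dual_resolvent_formula_general φ vc kc hrep hker hdecay α hα x
end

section
/- Let T : H¹ → H² be a bounded operator between Hilbert spaces with ‖T‖ ≤ 1 such that both columns of the 2×2 block structure are isometric in the following sense: suppose T = [A B; C D] : X ⊕ U → X ⊕ Y is a contraction such that [A; C] : X → X ⊕ Y and [B; D] : U → X ⊕ Y are both isometries. Then T itself is an isometry from X ⊕ U to X ⊕ Y. -/
/-! In `X ⊕₂ Y` put `a = (A x, C x)` and `b = (B u, D u)`, so that `T (x, ±u) = a ± b` and, by the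
isometric columns, `‖a‖ = ‖x‖`, `‖b‖ = ‖u‖`. Contractivity at `(x, u)` and `(x, -u)` bounds both
`‖a + b‖²` and `‖a - b‖²` by `‖a‖² + ‖b‖²`; since by the parallelogram law they sum to twice this,
both bounds are equalities. -/

theorem norm_add_sq_eq_of_norm_add_sq_le_of_norm_sub_sq_le (𝕜 : Type*) {E : Type*} [RCLike 𝕜]
    [NormedAddCommGroup E] [InnerProductSpace 𝕜 E] {a b : E}
    (hadd : ‖a + b‖ ^ 2 ≤ ‖a‖ ^ 2 + ‖b‖ ^ 2) (hsub : ‖a - b‖ ^ 2 ≤ ‖a‖ ^ 2 + ‖b‖ ^ 2) :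
    ‖a + b‖ ^ 2 = ‖a‖ ^ 2 + ‖b‖ ^ 2 := by
  linarith [parallelogram_law_with_norm 𝕜 a b]

/-- **A contraction with isometric columns is an isometry.**
If `T = [A B; C D] : X ⊕ U → X ⊕ Y` is contractive and both columns
`[A; C] : X → X ⊕ Y` and `[B; D] : U → X ⊕ Y` are isometric, then `T` is an
isometry: equality holds in the contraction inequality for all `x, u`. -/
theorem contraction_isometric_columns_isometry
    {X U Y : Type*}
    [NormedAddCommGroup X] [InnerProductSpace ℂ X]
    [NormedAddCommGroup U] [InnerProductSpace ℂ U]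
    [NormedAddCommGroup Y] [InnerProductSpace ℂ Y]
    (A : X →L[ℂ] X) (B : U →L[ℂ] X) (C : X →L[ℂ] Y) (D : U →L[ℂ] Y)
    (hcol1 : ∀ x : X, ‖A x‖ ^ 2 + ‖C x‖ ^ 2 = ‖x‖ ^ 2)
    (hcol2 : ∀ u : U, ‖B u‖ ^ 2 + ‖D u‖ ^ 2 = ‖u‖ ^ 2)
    (hcontr : ∀ (x : X) (u : U),
      ‖A x + B u‖ ^ 2 + ‖C x + D u‖ ^ 2 ≤ ‖x‖ ^ 2 + ‖u‖ ^ 2) :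
    ∀ (x : X) (u : U),
      ‖A x + B u‖ ^ 2 + ‖C x + D u‖ ^ 2 = ‖x‖ ^ 2 + ‖u‖ ^ 2 := by
  intro x u
  let a : WithLp 2 (X × Y) := WithLp.toLp 2 (A x, C x)
  let b : WithLp 2 (X × Y) := WithLp.toLp 2 (B u, D u)
  have ha : ‖a‖ ^ 2 = ‖x‖ ^ 2 := (WithLp.prod_norm_sq_eq_of_L2 a).trans (hcol1 x)
  have hb : ‖b‖ ^ 2 = ‖u‖ ^ 2 := (WithLp.prod_norm_sq_eq_of_L2 b).trans (hcol2 u)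
  have hadd : ‖a + b‖ ^ 2 = ‖A x + B u‖ ^ 2 + ‖C x + D u‖ ^ 2 :=
    WithLp.prod_norm_sq_eq_of_L2 (a + b)
  have hsub : ‖a - b‖ ^ 2 = ‖A x + B (-u)‖ ^ 2 + ‖C x + D (-u)‖ ^ 2 := by
    simp only [map_neg, ← sub_eq_add_neg]
    exact WithLp.prod_norm_sq_eq_of_L2 (a - b)
  have hadd_le : ‖a + b‖ ^ 2 ≤ ‖a‖ ^ 2 + ‖b‖ ^ 2 := by
    rw [hadd, ha, hb]
    exact hcontr x u
  have hsub_le : ‖a - b‖ ^ 2 ≤ ‖a‖ ^ 2 + ‖b‖ ^ 2 := by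
    rw [hsub, ha, hb, ← norm_neg u]
    exact hcontr x (-u)
  calc ‖A x + B u‖ ^ 2 + ‖C x + D u‖ ^ 2 = ‖a + b‖ ^ 2 := hadd.symm
    _ = ‖a‖ ^ 2 + ‖b‖ ^ 2 :=
      norm_add_sq_eq_of_norm_add_sq_le_of_norm_sub_sq_le ℂ hadd_le hsub_le
    _ = ‖x‖ ^ 2 + ‖u‖ ^ 2 := by rw [ha, hb]
end
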